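/- Let ν ∈ (−1, 1/2) with ν ≠ 0, and let p : ℝ → ℝ be continuous on [0,1]. Suppose w : ℝ → ℝ is four times continuously differentiable on [0,1], with ∫₀¹ w(x)² dx > 0, satisfies the simply supported boundary conditions w(0) = w(1) = 0 and w''(0) = w''(1) = 0, and solves simultaneously the PGD limit strip equation with Poisson ratio ν and load p and the Kirchhoff–Love strip equation with Poisson ratio ν and load p. Then there exist a positive integer n and a nonzero constant c such that w(x) = c·sin(n·π·x) for all x ∈ [0,1] and p(x) = (c·(n·π)⁴/(12(1−ν²)))·sin(n·π·x) for all x ∈ [0,1]. -/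

import Mathlib

open Real

/-- `D n w` is the `n`-th derivative of `w` on the interval `[0,1]`. -/
noncomputable def D (n : ℕ) (w : ℝ → ℝ) : ℝ → ℝ :=
  iteratedDerivWithin n w (Set.Icc (0 : ℝ) 1)

/-- The Rayleigh-type quotient `κ(w) = (∫₀¹ w w'') / (∫₀¹ w²)`. -/
noncomputable def kappa (w : ℝ → ℝ) : ℝ :=
  (∫ x in (0:ℝ)..1, w x * D 2 w x) / (∫ x in (0:ℝ)..1, (w x) ^ 2)

/-- The PGD limit strip equation with Poisson ratio `ν` and load `p`. -/
def PGDeq (ν : ℝ) (w p : ℝ → ℝ) : Prop :=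
  ∀ x ∈ Set.Icc (0 : ℝ) 1,
    ((1 - ν) / (12 * (1 + ν) * (1 - 2 * ν))) * D 4 w x
      - (ν ^ 2 / (12 * (1 - ν ^ 2) * (1 - 2 * ν)))
          * (2 * kappa w * D 2 w x - (kappa w) ^ 2 * w x) = p x

/-- The Kirchhoff–Love strip equation with Poisson ratio `ν` and load `p`. -/
def KLeq (ν : ℝ) (w p : ℝ → ℝ) : Prop :=
  ∀ x ∈ Set.Icc (0 : ℝ) 1, (1 / (12 * (1 - ν ^ 2))) * D 4 w x = p x

/-!
Subtracting the Kirchhoff–Love equation from the PGD equation leaves, since `ν ≠ 0`, the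
fourth-order equation `w⁗ = 2κ w'' - κ² w = (d²/dx² - κ)² w`. Integrating by parts,
`κ ∫ w² = -∫ w'² < 0`. The function `v = w'' - κ w` solves `v'' = κ v` and vanishes at both
ends, as does `w`, so Green's identity `(w v' - w' v)' = -v²` forces `v = 0`. Hence
`w'' = -μ² w` with `μ = √(-κ)`, so `w = c sin (μ x)`, and `w(1) = 0` quantizes `μ = nπ`.
-/

open Set

section Interval

variable {f f' : ℝ → ℝ} {a b : ℝ}

theorem integral_eq_sub_of_hasDerivWithinAt_Icc (hab : a ≤ b)
    (hf : ∀ x ∈ Icc a b, HasDerivWithinAt f (f' x) (Icc a b) x)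
    (hf' : IntervalIntegrable f' MeasureTheory.volume a b) :
    ∫ x in a..b, f' x = f b - f a :=
  intervalIntegral.integral_eq_sub_of_hasDerivAt_of_le hab
    (fun x hx => (hf x hx).continuousWithinAt)
    (fun x hx => (hf x (mem_Icc_of_Ioo hx)).hasDerivAt (Icc_mem_nhds hx.1 hx.2)) hf'

theorem eqOn_of_hasDerivWithinAt_Icc_zero
    (hf : ∀ x ∈ Icc a b, HasDerivWithinAt f 0 (Icc a b) x) :
    ∀ x ∈ Icc a b, f x = f a :=
  constant_of_has_deriv_right_zero (fun x hx => (hf x hx).continuousWithinAt)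
    fun x hx => (hf x (Ico_subset_Icc_self hx)).mono_of_mem_nhdsWithin (Icc_mem_nhdsGE_of_mem hx)

theorem eqOn_zero_of_integral_sq_eq_zero (hab : a < b) (hf : ContinuousOn f (Icc a b))
    (h : ∫ x in a..b, f x ^ 2 = 0) : ∀ x ∈ Icc a b, f x = 0 := by
  intro x hx
  by_contra hfx
  have := intervalIntegral.integral_pos (f := fun t => f t ^ 2) hab (hf.pow 2)
    (fun t _ => sq_nonneg (f t)) ⟨x, hx, pow_two_pos_of_ne_zero hfx⟩
  linarith

theorem exists_mem_Icc_ne_zero_of_integral_sq_pos (hab : a ≤ b)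
    (h : 0 < ∫ x in a..b, f x ^ 2) : ∃ x ∈ Icc a b, f x ≠ 0 := by
  by_contra! hf
  have hzero : ∫ x in a..b, f x ^ 2 = 0 := by
    rw [intervalIntegral.integral_congr (g := fun _ => (0 : ℝ)), intervalIntegral.integral_zero]
    intro t ht
    simp [hf t (uIcc_of_le hab ▸ ht)]
  linarith

end Interval

theorem eqOn_div_mul_sin_of_hasDerivWithinAt {f f' : ℝ → ℝ} {μ b : ℝ} (hμ : μ ≠ 0)
    (hf : ∀ x ∈ Icc 0 b, HasDerivWithinAt f (f' x) (Icc 0 b) x)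
    (hf' : ∀ x ∈ Icc 0 b, HasDerivWithinAt f' (-μ ^ 2 * f x) (Icc 0 b) x) (h0 : f 0 = 0) :
    ∀ x ∈ Icc 0 b, f x = f' 0 / μ * sin (μ * x) := by
  have hlin (x : ℝ) : HasDerivAt (fun t => μ * t) μ x := by
    simpa using (hasDerivAt_id x).const_mul μ
  have hsin (x : ℝ) := ((hlin x).sin).hasDerivWithinAt (s := Icc 0 b)
  have hcos (x : ℝ) := ((hlin x).cos).hasDerivWithinAt (s := Icc 0 b)
  -- first integrals of `f'' = -μ² f`
  have hP := eqOn_of_hasDerivWithinAt_Icc_zero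
    (f := fun t => μ * f t * cos (μ * t) - f' t * sin (μ * t)) fun x hx =>
      ((((hf x hx).const_mul μ).mul (hcos x)).sub ((hf' x hx).mul (hsin x))).congr_deriv (by ring)
  have hQ := eqOn_of_hasDerivWithinAt_Icc_zero
    (f := fun t => μ * f t * sin (μ * t) + f' t * cos (μ * t)) fun x hx =>
      ((((hf x hx).const_mul μ).mul (hsin x)).add ((hf' x hx).mul (hcos x))).congr_deriv (by ring)
  intro x hx
  have hPx := hP x hx
  have hQx := hQ x hx
  simp only [h0, mul_zero, sin_zero, cos_zero, mul_one, sub_zero, zero_add] at hPx hQx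
  field_simp
  linear_combination cos (μ * x) * hPx + sin (μ * x) * hQx - μ * f x * sin_sq_add_cos_sq (μ * x)

theorem exists_nat_pos_mul_pi_eq_of_sin_eq_zero {μ : ℝ} (hμ : 0 < μ) (h : sin μ = 0) :
    ∃ n : ℕ, 0 < n ∧ (n : ℝ) * π = μ := by
  obtain ⟨m, hm⟩ := sin_eq_zero_iff.mp h
  have hm0 : (0 : ℝ) < m := by nlinarith [pi_pos]
  lift m to ℕ using by exact_mod_cast hm0.le
  exact ⟨m, by exact_mod_cast hm0, by exact_mod_cast hm⟩

section Derivatives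

variable {w : ℝ → ℝ} {n : WithTop ℕ∞}

theorem hasDerivWithinAt_D {m : ℕ} (hw : ContDiffOn ℝ n w (Icc 0 1)) (hm : (m : WithTop ℕ∞) < n)
    {x : ℝ} (hx : x ∈ Icc (0 : ℝ) 1) : HasDerivWithinAt (D m w) (D (m + 1) w x) (Icc 0 1) x := by
  rw [D, D, iteratedDerivWithin_succ]
  exact (hw.differentiableOn_iteratedDerivWithin hm (uniqueDiffOn_Icc one_pos) x hx)
    |>.hasDerivWithinAt

theorem hasDerivWithinAt_D_one (hw : ContDiffOn ℝ n w (Icc 0 1)) (hn : 0 < n)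
    {x : ℝ} (hx : x ∈ Icc (0 : ℝ) 1) : HasDerivWithinAt w (D 1 w x) (Icc 0 1) x := by
  simpa only [D, iteratedDerivWithin_zero] using hasDerivWithinAt_D (m := 0) hw hn hx

theorem continuousOn_D {m : ℕ} (hw : ContDiffOn ℝ n w (Icc 0 1)) (hm : (m : WithTop ℕ∞) ≤ n) :
    ContinuousOn (D m w) (Icc 0 1) :=
  hw.continuousOn_iteratedDerivWithin hm (uniqueDiffOn_Icc one_pos)

end Derivatives

section SimplySupported

variable {w : ℝ → ℝ}

theorem integral_mul_D_two_eq_neg (hw : ContDiffOn ℝ 2 w (Icc 0 1)) (h0 : w 0 = 0)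
    (h1 : w 1 = 0) : ∫ x in (0 : ℝ)..1, w x * D 2 w x = -∫ x in (0 : ℝ)..1, D 1 w x ^ 2 := by
  have hI : uIcc (0 : ℝ) 1 = Icc 0 1 := uIcc_of_le zero_le_one
  rw [intervalIntegral.integral_mul_deriv_eq_deriv_mul_of_hasDerivWithinAt (u' := D 1 w)
    (fun x hx => hI ▸ hasDerivWithinAt_D_one hw (by norm_num) (hI ▸ hx))
    (fun x hx => hI ▸ hasDerivWithinAt_D hw (by norm_num) (hI ▸ hx))
    ((continuousOn_D hw (by norm_num)).intervalIntegrable_of_Icc zero_le_one)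
    ((continuousOn_D hw le_rfl).intervalIntegrable_of_Icc zero_le_one)]
  simp only [h0, h1, zero_mul, sub_zero, zero_sub, sq]

theorem integral_sq_D_one_pos (hw : ContDiffOn ℝ 1 w (Icc 0 1)) (h0 : w 0 = 0)
    (hpos : 0 < ∫ x in (0 : ℝ)..1, w x ^ 2) : 0 < ∫ x in (0 : ℝ)..1, D 1 w x ^ 2 := by
  refine (intervalIntegral.integral_nonneg zero_le_one fun x _ => sq_nonneg _).lt_of_ne
    fun hzero => ?_
  have hD1 := eqOn_zero_of_integral_sq_eq_zero one_pos (continuousOn_D hw le_rfl) hzero.symm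
  obtain ⟨x, hx, hwx⟩ := exists_mem_Icc_ne_zero_of_integral_sq_pos zero_le_one hpos
  refine hwx ?_
  rw [eqOn_of_hasDerivWithinAt_Icc_zero (f := w) (fun t ht => ?_) x hx, h0]
  simpa only [hD1 t ht] using hasDerivWithinAt_D_one hw (by norm_num) ht

theorem kappa_neg (hw : ContDiffOn ℝ 2 w (Icc 0 1)) (h0 : w 0 = 0) (h1 : w 1 = 0)
    (hpos : 0 < ∫ x in (0 : ℝ)..1, w x ^ 2) : kappa w < 0 := by
  refine div_neg_of_neg_of_pos ?_ hpos
  rw [integral_mul_D_two_eq_neg hw h0 h1, neg_lt_zero]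
  exact integral_sq_D_one_pos (hw.of_le (by norm_num)) h0 hpos

theorem D_two_eq_mul_of_D_four_eq {c : ℝ} (hw : ContDiffOn ℝ 4 w (Icc 0 1))
    (hE : ∀ x ∈ Icc (0 : ℝ) 1, D 4 w x = 2 * c * D 2 w x - c ^ 2 * w x)
    (h0 : w 0 = 0) (h1 : w 1 = 0) (h0'' : D 2 w 0 = 0) (h1'' : D 2 w 1 = 0) :
    ∀ x ∈ Icc (0 : ℝ) 1, D 2 w x = c * w x := by
  have hv : ∀ x ∈ Icc (0 : ℝ) 1, HasDerivWithinAt (fun t => D 2 w t - c * w t)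
      (D 3 w x - c * D 1 w x) (Icc 0 1) x := fun x hx =>
    (hasDerivWithinAt_D hw (by norm_num) hx).sub
      ((hasDerivWithinAt_D_one hw (by norm_num) hx).const_mul c)
  have hv' : ∀ x ∈ Icc (0 : ℝ) 1, HasDerivWithinAt (fun t => D 3 w t - c * D 1 w t)
      (c * (D 2 w x - c * w x)) (Icc 0 1) x := fun x hx =>
    ((hasDerivWithinAt_D hw (by norm_num) hx).sub
      ((hasDerivWithinAt_D hw (by norm_num) hx).const_mul c)).congr_deriv (by rw [hE x hx]; ring)
  have hgreen : ∀ x ∈ Icc (0 : ℝ) 1, HasDerivWithinAt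
      (fun t => w t * (D 3 w t - c * D 1 w t) - D 1 w t * (D 2 w t - c * w t))
      (-(D 2 w x - c * w x) ^ 2) (Icc 0 1) x := fun x hx =>
    (((hasDerivWithinAt_D_one hw (by norm_num) hx).mul (hv' x hx)).sub
      ((hasDerivWithinAt_D hw (by norm_num) hx).mul (hv x hx))).congr_deriv (by ring)
  have hv_cont : ContinuousOn (fun t => D 2 w t - c * w t) (Icc 0 1) :=
    (continuousOn_D hw (by norm_num)).sub (continuousOn_const.mul hw.continuousOn)
  have hv_sq : ∫ x in (0 : ℝ)..1, (D 2 w x - c * w x) ^ 2 = 0 := by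
    have := integral_eq_sub_of_hasDerivWithinAt_Icc zero_le_one hgreen
      ((hv_cont.pow 2).neg.intervalIntegrable_of_Icc zero_le_one)
    rw [intervalIntegral.integral_neg, h0, h1, h0'', h1''] at this
    linarith
  intro x hx
  exact sub_eq_zero.mp (eqOn_zero_of_integral_sq_eq_zero one_pos hv_cont hv_sq x hx)

end SimplySupported

theorem D_four_eq_of_PGDeq_of_KLeq {ν : ℝ} {w p : ℝ → ℝ} (hν₁ : 1 + ν ≠ 0) (hν₂ : 1 - ν ≠ 0)
    (hν₃ : 1 - 2 * ν ≠ 0) (hν0 : ν ≠ 0) (hPGD : PGDeq ν w p) (hKL : KLeq ν w p) :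
    ∀ x ∈ Icc (0 : ℝ) 1, D 4 w x = 2 * kappa w * D 2 w x - kappa w ^ 2 * w x := by
  intro x hx
  have hsub := sub_eq_zero.mpr ((hPGD x hx).trans (hKL x hx).symm)
  have hν₄ : 1 - ν ^ 2 ≠ 0 := by
    rw [show 1 - ν ^ 2 = (1 + ν) * (1 - ν) by ring]
    exact mul_ne_zero hν₁ hν₂
  have hcoeff : (1 - ν) / (12 * (1 + ν) * (1 - 2 * ν)) - 1 / (12 * (1 - ν ^ 2))
      = ν ^ 2 / (12 * (1 - ν ^ 2) * (1 - 2 * ν)) := by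
    rw [div_sub_div _ _ (by positivity) (by positivity),
      div_eq_div_iff (by positivity) (by positivity)]
    ring
  have hB : ν ^ 2 / (12 * (1 - ν ^ 2) * (1 - 2 * ν)) ≠ 0 := by positivity
  refine mul_left_cancel₀ hB ?_
  linear_combination hsub - D 4 w x * hcoeff

theorem simply_supported_solution_is_sinusoidal_general
    (ν : ℝ) (hν : ν ∈ Set.Ioo (-1 : ℝ) (1/2)) (hν0 : ν ≠ 0)
    (p : ℝ → ℝ)
    (w : ℝ → ℝ) (hw : ContDiffOn ℝ 4 w (Set.Icc (0 : ℝ) 1))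
    (hpos : 0 < ∫ x in (0:ℝ)..1, (w x) ^ 2)
    (h0 : w 0 = 0) (h1 : w 1 = 0) (h0'' : D 2 w 0 = 0) (h1'' : D 2 w 1 = 0)
    (hPGD : PGDeq ν w p) (hKL : KLeq ν w p) :
    ∃ n : ℕ, 0 < n ∧ ∃ c : ℝ, c ≠ 0 ∧
      (∀ x ∈ Set.Icc (0 : ℝ) 1, w x = c * Real.sin ((n : ℝ) * π * x)) ∧
      (∀ x ∈ Set.Icc (0 : ℝ) 1,
        p x = (c * ((n : ℝ) * π) ^ 4 / (12 * (1 - ν ^ 2))) * Real.sin ((n : ℝ) * π * x)) := by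
  obtain ⟨hν₁, hν₂⟩ := hν
  have hE := D_four_eq_of_PGDeq_of_KLeq (by linarith : (0 : ℝ) < 1 + ν).ne'
    (by linarith : (0 : ℝ) < 1 - ν).ne' (by linarith : (0 : ℝ) < 1 - 2 * ν).ne' hν0 hPGD hKL
  set k := kappa w
  have hk : k < 0 := kappa_neg (hw.of_le (by norm_num)) h0 h1 hpos
  have hw2 := D_two_eq_mul_of_D_four_eq hw hE h0 h1 h0'' h1''
  set μ := √(-k)
  have hμ : 0 < μ := sqrt_pos.mpr (neg_pos.mpr hk)
  have hkμ : k = -μ ^ 2 := by rw [sq_sqrt (neg_nonneg.mpr hk.le), neg_neg]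
  have hsin := eqOn_div_mul_sin_of_hasDerivWithinAt hμ.ne'
    (fun x hx => hasDerivWithinAt_D_one hw (by norm_num) hx)
    (fun x hx => by rw [← hkμ, ← hw2 x hx]; exact hasDerivWithinAt_D hw (by norm_num) hx) h0
  set c := D 1 w 0 / μ
  have hc : c ≠ 0 := fun hc => by
    obtain ⟨x, hx, hwx⟩ := exists_mem_Icc_ne_zero_of_integral_sq_pos zero_le_one hpos
    exact hwx (by rw [hsin x hx, hc, zero_mul])
  have hsinμ : sin μ = 0 := by
    have := hsin 1 ⟨zero_le_one, le_rfl⟩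
    rw [h1, mul_one, eq_comm] at this
    exact (mul_eq_zero.mp this).resolve_left hc
  obtain ⟨n, hn, hnμ⟩ := exists_nat_pos_mul_pi_eq_of_sin_eq_zero hμ hsinμ
  refine ⟨n, hn, c, hc, fun x hx => by rw [hsin x hx, hnμ], fun x hx => ?_⟩
  rw [← hKL x hx, hE x hx, hw2 x hx, hsin x hx, hkμ, ← hnμ]
  ring

/-- For `ν ≠ 0`, a simply supported strip deflection solving simultaneously the PGD limit
equation and the Kirchhoff–Love equation must be a pure sinusoidal deflection
`w(x) = c sin(nπx)` under a sinusoidal load. -/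
theorem simply_supported_solution_is_sinusoidal
    (ν : ℝ) (hν : ν ∈ Set.Ioo (-1 : ℝ) (1/2)) (hν0 : ν ≠ 0)
    (p : ℝ → ℝ) (hp : ContinuousOn p (Set.Icc (0 : ℝ) 1))
    (w : ℝ → ℝ) (hw : ContDiffOn ℝ 4 w (Set.Icc (0 : ℝ) 1))
    (hpos : 0 < ∫ x in (0:ℝ)..1, (w x) ^ 2)
    (h0 : w 0 = 0) (h1 : w 1 = 0) (h0'' : D 2 w 0 = 0) (h1'' : D 2 w 1 = 0)
    (hPGD : PGDeq ν w p) (hKL : KLeq ν w p) :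
    ∃ n : ℕ, 0 < n ∧ ∃ c : ℝ, c ≠ 0 ∧
      (∀ x ∈ Set.Icc (0 : ℝ) 1, w x = c * Real.sin ((n : ℝ) * π * x)) ∧
      (∀ x ∈ Set.Icc (0 : ℝ) 1,
        p x = (c * ((n : ℝ) * π) ^ 4 / (12 * (1 - ν ^ 2))) * Real.sin ((n : ℝ) * π * x)) :=
  simply_supported_solution_is_sinusoidal_general ν hν hν0 p w hw hpos h0 h1 h0'' h1'' hPGD hKL
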